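/- Let n ≥ 4 be even and let A_n = ⟨a, b | (ab)^{n/2} = (ba)^{n/2} shifted, i.e., the Artin relation of length n⟩ with central element z = Δ = (ab)^{n/2}. Let H be a finite-index normal subgroup of A_n and ρ: H → ℤ a homomorphism with ρ(⟨z⟩ ∩ H) ≠ {0}. Then there exist a positive integer m and g ∈ A_n such that at least one of g⁻¹ a^m g and g⁻¹ b^m g lies in H and has nonzero image under ρ. -/

import Mathlib

/-- The alternating product `x y x y ⋯` of length `n`. -/
def altG {G : Type*} [Monoid G] : ℕ → G → G → G
  | 0, _, _ => 1
  | n + 1, x, y => x * altG n y x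

lemma map_altG {M N : Type*} [Monoid M] [Monoid N] (f : M →* N) :
    ∀ (n : ℕ) (x y : M), f (altG n x y) = altG n (f x) (f y)
  | 0, _, _ => by simp [altG]
  | n + 1, x, y => by simp [altG, map_altG f n]

/-- The braid relation of the two-generator Artin group with exponent `n`. -/
def braidRels (n : ℕ) : Set (FreeGroup Bool) :=
  {altG n (FreeGroup.of true) (FreeGroup.of false) *
    (altG n (FreeGroup.of false) (FreeGroup.of true))⁻¹}

/-- The two-generator Artin group `A_n`. -/
abbrev ArtinTwo (n : ℕ) := PresentedGroup (braidRels n)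

/-- The generator `a`. -/
def artinA (n : ℕ) : ArtinTwo n := PresentedGroup.of true

/-- The generator `b`. -/
def artinB (n : ℕ) : ArtinTwo n := PresentedGroup.of false

/-- The Garside element `Δ = (aba⋯)_n`. -/
def artinDelta (n : ℕ) : ArtinTwo n := altG n (artinA n) (artinB n)

/-- The homomorphism `A_n → ℤ/2` sending both generators to `1`. -/
def toZ2 (n : ℕ) : ArtinTwo n →* Multiplicative (ZMod 2) :=
  PresentedGroup.toGroup (f := fun _ => Multiplicative.ofAdd 1) (by
    intro r hr
    simp only [braidRels, Set.mem_singleton_iff] at hr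
    subst hr
    simp [map_altG])

/-- The index-two subgroup `A_n'` of even-length words. -/
def AnPrime (n : ℕ) : Subgroup (ArtinTwo n) := (toZ2 n).ker

/-!
Let `T : A_n → ℤ` be the transfer of `ρ`. Since `z` is central, `T (z ^ m) = [A_n : H] • ρ (z ^ m)`,
which is nonzero for the `m` of the hypothesis, so `T z ≠ 0`. As `z` is a word in `a` and `b`,
`T a ≠ 0` or `T b ≠ 0`. Finally, the transfer of an element `x` is the sum of the values of `ρ`
on elements `g⁻¹ x ^ k g ∈ H` with `k > 0`, one for each `⟨x⟩`-orbit on `A_n ⧸ H`, so one of them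
is nonzero.
-/

lemma altG_one_one {G : Type*} [Monoid G] : ∀ n : ℕ, altG n (1 : G) 1 = 1
  | 0 => rfl
  | n + 1 => by rw [altG, altG_one_one n, one_mul]

lemma altG_two_mul {G : Type*} [Monoid G] : ∀ (k : ℕ) (x y : G), altG (2 * k) x y = (x * y) ^ k
  | 0, _, _ => by rw [mul_zero, altG, pow_zero]
  | k + 1, x, y => by
    rw [show 2 * (k + 1) = 2 * k + 1 + 1 by ring, altG, altG, altG_two_mul k, ← mul_assoc, pow_succ']

lemma PresentedGroup.mem_center_of_forall_commute_of {α : Type*} {rels : Set (FreeGroup α)}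
    {x : PresentedGroup rels} (h : ∀ j, Commute x (PresentedGroup.of j)) :
    x ∈ Subgroup.center (PresentedGroup rels) :=
  Subgroup.mem_center_iff.mpr fun g => by
    have hg : g ∈ Subgroup.centralizer {x} := PresentedGroup.generated_by rels _
      (fun j => Subgroup.mem_centralizer_singleton_iff.mpr (h j).eq.symm) g
    exact Subgroup.mem_centralizer_singleton_iff.mp hg

lemma artinTwo_braid (n : ℕ) : altG n (artinA n) (artinB n) = altG n (artinB n) (artinA n) := by
  have h := PresentedGroup.one_of_mem (rels := braidRels n) rfl
  rw [map_mul, map_inv, map_altG, map_altG, mul_inv_eq_one] at h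
  exact h

lemma artinDelta_mem_center {n : ℕ} (heven : Even n) :
    artinDelta n ∈ Subgroup.center (ArtinTwo n) := by
  obtain ⟨s, rfl⟩ := even_iff_two_dvd.mp heven
  have hbraid : (artinA (2 * s) * artinB (2 * s)) ^ s = (artinB (2 * s) * artinA (2 * s)) ^ s := by
    simpa only [altG_two_mul] using artinTwo_braid (2 * s)
  rw [artinDelta, altG_two_mul]
  refine PresentedGroup.mem_center_of_forall_commute_of fun j => ?_
  cases j
  · show _ * artinB _ = artinB _ * _
    rw [hbraid, mul_pow_mul, hbraid]
  · show _ * artinA _ = artinA _ * _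
    rw [mul_pow_mul, ← hbraid]

namespace MonoidHom

variable {G A : Type*} [Group G] [CommGroup A] {H : Subgroup G} [H.FiniteIndex] (ϕ : H →* A)

lemma transfer_eq_pow_of_mem_center {g : G} (hg : g ∈ Subgroup.center G) (hgH : g ∈ H) :
    transfer ϕ g = ϕ ⟨g, hgH⟩ ^ H.index := by
  have hconj (k : ℕ) (g₀ : G) (_ : g₀⁻¹ * g ^ k * g₀ ∈ H) : g₀⁻¹ * g ^ k * g₀ = g ^ k := by
    have hcomm : Commute g₀ g := Subgroup.mem_center_iff.mp hg g₀
    rw [mul_assoc, (hcomm.symm.pow_left k).eq, inv_mul_cancel_left]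
  rw [transfer_eq_pow ϕ g hconj, ← map_pow]
  rfl

lemma exists_conj_pow_ne_one_of_transfer_ne_one {g : G} (hg : transfer ϕ g ≠ 1) :
    ∃ k : ℕ, 0 < k ∧ ∃ g₀ : G, ∃ hk : g₀⁻¹ * g ^ k * g₀ ∈ H, ϕ ⟨g₀⁻¹ * g ^ k * g₀, hk⟩ ≠ 1 := by
  by_contra! h
  have := Fintype.ofFinite (Quotient (MulAction.orbitRel (Subgroup.zpowers g) (G ⧸ H)))
  rw [transfer_eq_prod_quotient_orbitRel_zpowers_quot] at hg
  exact hg (Finset.prod_eq_one fun q _ => h _ (Nat.pos_of_neZero _) _ _)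

end MonoidHom

theorem artin_even_conjugate_generator_power_general (n : ℕ) (heven : Even n)
    (H : Subgroup (ArtinTwo n)) (hfi : H.FiniteIndex)
    (ρ : H →* Multiplicative ℤ)
    (hρ : ∃ (m : ℤ) (hm : (artinDelta n) ^ m ∈ H), ρ ⟨(artinDelta n) ^ m, hm⟩ ≠ 1) :
    ∃ m : ℕ, 0 < m ∧ ∃ g : ArtinTwo n,
      (∃ hmem : g⁻¹ * (artinA n) ^ m * g ∈ H, ρ ⟨g⁻¹ * (artinA n) ^ m * g, hmem⟩ ≠ 1) ∨
      (∃ hmem : g⁻¹ * (artinB n) ^ m * g ∈ H, ρ ⟨g⁻¹ * (artinB n) ^ m * g, hmem⟩ ≠ 1) := by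
  obtain ⟨m, hmH, hne⟩ := hρ
  have hTz : ρ.transfer (artinDelta n ^ m) ≠ 1 := by
    rw [ρ.transfer_eq_pow_of_mem_center (zpow_mem (artinDelta_mem_center heven) m) hmH]
    exact (pow_eq_one_iff_left hfi.index_ne_zero).not.mpr hne
  have hTΔ : ρ.transfer (artinDelta n) ≠ 1 := fun h => hTz (by rw [map_zpow, h, one_zpow])
  have hTab : ρ.transfer (artinA n) ≠ 1 ∨ ρ.transfer (artinB n) ≠ 1 := by
    by_contra! h
    rw [artinDelta, map_altG, h.1, h.2, altG_one_one] at hTΔ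
    exact hTΔ rfl
  rcases hTab with ha | hb
  · obtain ⟨k, hk, g, hmem, hg⟩ := ρ.exists_conj_pow_ne_one_of_transfer_ne_one ha
    exact ⟨k, hk, g, .inl ⟨hmem, hg⟩⟩
  · obtain ⟨k, hk, g, hmem, hg⟩ := ρ.exists_conj_pow_ne_one_of_transfer_ne_one hb
    exact ⟨k, hk, g, .inr ⟨hmem, hg⟩⟩

/-- for even `n ≥ 4`, `z = Δ` central, `H ⊴ A_n` of finite index, and
`ρ : H → ℤ` nontrivial on `⟨z⟩ ∩ H`, there are `m > 0` and `g ∈ A_n` such that at least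
one of `g⁻¹ a^m g`, `g⁻¹ b^m g` lies in `H` and has nonzero image under `ρ`. -/
theorem artin_even_conjugate_generator_power (n : ℕ) (heven : Even n) (hn : 4 ≤ n)
    (H : Subgroup (ArtinTwo n)) [H.Normal] (hfi : H.FiniteIndex)
    (ρ : H →* Multiplicative ℤ)
    (hρ : ∃ (m : ℤ) (hm : (artinDelta n) ^ m ∈ H), ρ ⟨(artinDelta n) ^ m, hm⟩ ≠ 1) :
    ∃ m : ℕ, 0 < m ∧ ∃ g : ArtinTwo n,
      (∃ hmem : g⁻¹ * (artinA n) ^ m * g ∈ H, ρ ⟨g⁻¹ * (artinA n) ^ m * g, hmem⟩ ≠ 1) ∨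
      (∃ hmem : g⁻¹ * (artinB n) ^ m * g ∈ H, ρ ⟨g⁻¹ * (artinB n) ^ m * g, hmem⟩ ≠ 1) :=
  artin_even_conjugate_generator_power_general n heven H hfi ρ hρ
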